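/- Let p be a design on N ≥ 2 units satisfying positivity and the fixed total weight condition: for every w in the support, Σ_{i : w_i = 1} 1/π_i + Σ_{i : w_i = 0} 1/(1 − π_i) = 2N. Let β ∈ ℝ, suppose the treatment effects are homogeneous (Y_i(1) − Y_i(0) = τ for all i), and let ĉ(v) be the β-imputed vector with coordinates ĉ_i(v) = v_i·(Y_i(1) − π_i·β) + (1 − v_i)·(Y_i(0) + (1 − π_i)·β). Then, with A₁ and A₂ the quantities from the imputation decomposition ψ(ĉ(v)) = Var(τ̂) + A₁(v) + A₂(v), one has E[A₂(W)] = 0, and consequently E[ψ(ĉ(W))] = Var(τ̂) + E[A₁(W)] ≥ Var(τ̂). -/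

import Mathlib

open Finset

noncomputable section

/-- Propensity score `π_i = Pr(W_i = 1)` of a design `p` on `N` units. -/
def piS (N : ℕ) (p : (Fin N → Bool) → ℝ) (i : Fin N) : ℝ :=
  ∑ w : Fin N → Bool, if w i then p w else 0

/-- Expectation under the design. -/
def expct (N : ℕ) (p f : (Fin N → Bool) → ℝ) : ℝ :=
  ∑ w : Fin N → Bool, p w * f w

/-- Average treatment effect. -/
def tauATE (N : ℕ) (Y1 Y0 : Fin N → ℝ) : ℝ :=
  (1 / (N : ℝ)) * ∑ i, (Y1 i - Y0 i)

/-- Horvitz–Thompson estimator. -/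
def tauHT (N : ℕ) (p : (Fin N → Bool) → ℝ) (Y1 Y0 : Fin N → ℝ) (w : Fin N → Bool) : ℝ :=
  (1 / (N : ℝ)) * (∑ i, if w i then Y1 i / piS N p i else 0)
    - (1 / (N : ℝ)) * (∑ i, if w i then 0 else Y0 i / (1 - piS N p i))

/-- Design-based variance of the Horvitz–Thompson estimator. -/
def varHT (N : ℕ) (p : (Fin N → Bool) → ℝ) (Y1 Y0 : Fin N → ℝ) : ℝ :=
  expct N p (fun w => (tauHT N p Y1 Y0 w - tauATE N Y1 Y0) ^ 2)

/-- `ψ(x) = (1/N²)·Σ_w p_w·(Σ_{w_i=1} x_i/π_i − Σ_{w_i=0} x_i/(1 − π_i))²`. -/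
def psiGen (N : ℕ) (p : (Fin N → Bool) → ℝ) (x : Fin N → ℝ) : ℝ :=
  (1 / (N : ℝ) ^ 2) * ∑ w : Fin N → Bool, p w *
    ((∑ i, if w i then x i / piS N p i else 0)
      - ∑ i, if w i then 0 else x i / (1 - piS N p i)) ^ 2

/-- Real indicator of a Boolean. -/
def indR (b : Bool) : ℝ := if b then 1 else 0

/-- The `β`-imputed vector for a general design:
`ĉ_i(v) = v_i·(Y_i(1) − π_i·β) + (1 − v_i)·(Y_i(0) + (1 − π_i)·β)`. -/
def cHatGenBeta (N : ℕ) (p : (Fin N → Bool) → ℝ) (Y1 Y0 : Fin N → ℝ) (β : ℝ)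
    (v : Fin N → Bool) (i : Fin N) : ℝ :=
  if v i then Y1 i - piS N p i * β else Y0 i + (1 - piS N p i) * β

/-- `Σ_{i : w_i = 1} v_i/π_i − Σ_{i : w_i = 0} v_i/(1 − π_i)`. -/
def Sv (N : ℕ) (p : (Fin N → Bool) → ℝ) (v w : Fin N → Bool) : ℝ :=
  (∑ i, if w i then indR (v i) / piS N p i else 0)
    - ∑ i, if w i then 0 else indR (v i) / (1 - piS N p i)

/-- Number of control units `N_c(w)` (as a real number). -/
def NcR (N : ℕ) (w : Fin N → Bool) : ℝ :=
  ∑ i : Fin N, if w i then (0 : ℝ) else 1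

/-- The term `A₁(v)` of the imputation decomposition. -/
def A1 (N : ℕ) (p : (Fin N → Bool) → ℝ) (Y1 Y0 : Fin N → ℝ) (β : ℝ)
    (v : Fin N → Bool) : ℝ :=
  ((tauATE N Y1 Y0 - β) ^ 2 / (N : ℝ) ^ 2) * ∑ w : Fin N → Bool, p w *
    (Sv N p v w - ((∑ i, if w i then 1 / piS N p i else 0) - (N : ℝ))) ^ 2

/-- The term `A₂(v)` of the imputation decomposition. -/
def A2 (N : ℕ) (p : (Fin N → Bool) → ℝ) (Y1 Y0 : Fin N → ℝ) (β : ℝ)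
    (v : Fin N → Bool) : ℝ :=
  (2 * (tauATE N Y1 Y0 - β) / (N : ℝ) ^ 2) * ∑ w : Fin N → Bool, p w *
    (((∑ i, if w i then Y0 i / piS N p i else 0)
        - ∑ i, if w i then 0 else Y0 i / (1 - piS N p i))
      + tauATE N Y1 Y0 *
          ((∑ i, if w i then (1 - piS N p i) / piS N p i else 0) - NcR N w)) *
    (Sv N p v w
      - ((∑ i, if w i then (1 - piS N p i) / piS N p i else 0) - NcR N w))

/-!
The Horvitz–Thompson contrast `Σ_{w_i=1} x_i/π_i − Σ_{w_i=0} x_i/(1−π_i)` is the dot product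
`λ(w) ⬝ᵥ x` with `λ_i(w) = 1/π_i` or `−1/(1−π_i)`. One checks `N(τ̂(w) − τ) = λ(w) ⬝ᵥ c`, so
`Var(τ̂) = ψ(c)`, and under homogeneous effects `ĉ(v) = c + (τ − β)·d(v)` with
`d_i(v) = v_i − (1 − π_i)`. Expanding the square in `ψ(ĉ(v))` gives `Var(τ̂) + A₁(v) + A₂(v)`,
`A₂` being the cross term, which is linear in `d(v)`. Averaging over `v` replaces `d(v)` by
`E[d(W)] = 2π − 1`, and `λ(w) ⬝ᵥ (2π − 1) = 2N − Σ_i (w_i/π_i + (1 − w_i)/(1 − π_i))` vanishes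
on the support by the fixed total weight condition; so `E[A₂(W)] = 0`, while `A₁ ≥ 0`.
-/

namespace FixedWeight

variable {N : ℕ} {p : (Fin N → Bool) → ℝ}

def htCoef (N : ℕ) (p : (Fin N → Bool) → ℝ) (w : Fin N → Bool) (i : Fin N) : ℝ :=
  if w i then 1 / piS N p i else -1 / (1 - piS N p i)

def cHT (N : ℕ) (p : (Fin N → Bool) → ℝ) (Y1 Y0 : Fin N → ℝ) (i : Fin N) : ℝ :=
  (1 - piS N p i) * Y1 i + piS N p i * Y0 i

def imputationShift (N : ℕ) (p : (Fin N → Bool) → ℝ) (v : Fin N → Bool) (i : Fin N) : ℝ :=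
  indR (v i) - (1 - piS N p i)

lemma sub_sum_ite_eq_htCoef_dotProduct (x : Fin N → ℝ) (w : Fin N → Bool) :
    (∑ i, if w i then x i / piS N p i else 0) - (∑ i, if w i then 0 else x i / (1 - piS N p i))
      = htCoef N p w ⬝ᵥ x := by
  rw [dotProduct, ← sum_sub_distrib]
  refine sum_congr rfl fun i _ => ?_
  by_cases h : w i <;> simp [htCoef, h] <;> ring

lemma psiGen_eq (x : Fin N → ℝ) :
    psiGen N p x = 1 / (N : ℝ) ^ 2 * expct N p fun w => (htCoef N p w ⬝ᵥ x) ^ 2 := by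
  simp only [psiGen, expct, sub_sum_ite_eq_htCoef_dotProduct]

lemma Sv_eq (v w : Fin N → Bool) : Sv N p v w = htCoef N p w ⬝ᵥ fun i => indR (v i) :=
  sub_sum_ite_eq_htCoef_dotProduct _ w

lemma expct_dotProduct (a : Fin N → ℝ) (f : (Fin N → Bool) → Fin N → ℝ) :
    expct N p (fun v => a ⬝ᵥ f v) = a ⬝ᵥ ∑ v, p v • f v := by
  simp only [expct, dotProduct_sum, dotProduct_smul, smul_eq_mul]

lemma expct_add (f g : (Fin N → Bool) → ℝ) :
    expct N p (fun v => f v + g v) = expct N p f + expct N p g := by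
  simp only [expct, mul_add, sum_add_distrib]

lemma expct_const (hsum : ∑ w, p w = 1) (c : ℝ) : expct N p (fun _ => c) = c := by
  rw [expct, ← sum_mul, hsum, one_mul]

lemma expct_nonneg (hp : ∀ w, 0 ≤ p w) {f : (Fin N → Bool) → ℝ} (hf : ∀ w, 0 ≤ f w) :
    0 ≤ expct N p f :=
  sum_nonneg fun w _ => mul_nonneg (hp w) (hf w)

lemma sum_mul_indR (i : Fin N) : ∑ v, p v * indR (v i) = piS N p i := by
  refine sum_congr rfl fun v _ => ?_
  by_cases h : v i <;> simp [indR, h]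

lemma sum_smul_imputationShift (hsum : ∑ w, p w = 1) :
    ∑ v, p v • imputationShift N p v = fun i => 2 * piS N p i - 1 := by
  funext i
  simp only [Finset.sum_apply, Pi.smul_apply, smul_eq_mul, imputationShift, mul_sub,
    sum_sub_distrib, sum_mul_indR, ← sum_mul, hsum]
  ring

lemma cHatGenBeta_eq (Y1 Y0 : Fin N → ℝ) (β : ℝ) (hhom : ∀ i, Y1 i - Y0 i = tauATE N Y1 Y0)
    (v : Fin N → Bool) :
    cHatGenBeta N p Y1 Y0 β v
      = cHT N p Y1 Y0 + (tauATE N Y1 Y0 - β) • imputationShift N p v := by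
  funext i
  have hY : Y1 i = Y0 i + tauATE N Y1 Y0 := by linarith [hhom i]
  by_cases h : v i <;> simp [cHatGenBeta, cHT, imputationShift, indR, h, hY] <;> ring

lemma cHT_eq (Y1 Y0 : Fin N → ℝ) (hhom : ∀ i, Y1 i - Y0 i = tauATE N Y1 Y0) :
    cHT N p Y1 Y0 = Y0 + tauATE N Y1 Y0 • fun i => 1 - piS N p i := by
  funext i
  have hY : Y1 i = Y0 i + tauATE N Y1 Y0 := by linarith [hhom i]
  simp only [cHT, hY, Pi.add_apply, Pi.smul_apply, smul_eq_mul]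
  ring

lemma A1_nonneg (hp : ∀ w, 0 ≤ p w) (Y1 Y0 : Fin N → ℝ) (β : ℝ) (v : Fin N → Bool) :
    0 ≤ A1 N p Y1 Y0 β v :=
  mul_nonneg (by positivity) (expct_nonneg hp fun _ => sq_nonneg _)

lemma htCoef_dotProduct_one_sub_piS (hpos : ∀ i, 0 < piS N p i ∧ piS N p i < 1) (w : Fin N → Bool) :
    htCoef N p w ⬝ᵥ (fun i => 1 - piS N p i)
      = (∑ i, if w i then 1 / piS N p i else 0) - N := by
  rw [dotProduct, show (N : ℝ) = ∑ _i : Fin N, 1 by simp, ← sum_sub_distrib]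
  refine sum_congr rfl fun i _ => ?_
  have := (hpos i).1.ne'
  have := (sub_pos.2 (hpos i).2).ne'
  by_cases h : w i <;> simp [htCoef, h] <;> field_simp

lemma htCoef_dotProduct_one_sub_piS_eq_sub_NcR (hpos : ∀ i, 0 < piS N p i ∧ piS N p i < 1)
    (w : Fin N → Bool) :
    htCoef N p w ⬝ᵥ (fun i => 1 - piS N p i)
      = (∑ i, if w i then (1 - piS N p i) / piS N p i else 0) - NcR N w := by
  rw [dotProduct, NcR, ← sum_sub_distrib]
  refine sum_congr rfl fun i _ => ?_
  have := (sub_pos.2 (hpos i).2).ne'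
  by_cases h : w i <;> simp [htCoef, h] <;> field_simp

lemma htCoef_dotProduct_two_mul_piS_sub_one (hpos : ∀ i, 0 < piS N p i ∧ piS N p i < 1)
    (w : Fin N → Bool) :
    htCoef N p w ⬝ᵥ (fun i => 2 * piS N p i - 1)
      = 2 * N - ∑ i, if w i then 1 / piS N p i else 1 / (1 - piS N p i) := by
  rw [dotProduct, show 2 * (N : ℝ) = ∑ _i : Fin N, 2 by simp [mul_comm], ← sum_sub_distrib]
  refine sum_congr rfl fun i _ => ?_
  have := (hpos i).1.ne'
  have := (sub_pos.2 (hpos i).2).ne'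
  by_cases h : w i <;> simp only [htCoef, h, if_true, Bool.false_eq_true, if_false] <;> field_simp
  ring

lemma tauHT_sub_tauATE (hpos : ∀ i, 0 < piS N p i ∧ piS N p i < 1)
    (Y1 Y0 : Fin N → ℝ) (w : Fin N → Bool) :
    tauHT N p Y1 Y0 w - tauATE N Y1 Y0 = 1 / (N : ℝ) * (htCoef N p w ⬝ᵥ cHT N p Y1 Y0) := by
  suffices h : (∑ i, if w i then Y1 i / piS N p i else 0)
      - (∑ i, if w i then 0 else Y0 i / (1 - piS N p i)) - ∑ i, (Y1 i - Y0 i)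
      = htCoef N p w ⬝ᵥ cHT N p Y1 Y0 by
    rw [tauHT, tauATE, ← h]
    ring
  rw [dotProduct, ← sum_sub_distrib, ← sum_sub_distrib]
  refine sum_congr rfl fun i _ => ?_
  have := (hpos i).1.ne'
  have := (sub_pos.2 (hpos i).2).ne'
  by_cases h : w i <;> simp [htCoef, cHT, h] <;> field_simp <;> ring

lemma varHT_eq_psiGen (hpos : ∀ i, 0 < piS N p i ∧ piS N p i < 1)
    (Y1 Y0 : Fin N → ℝ) : varHT N p Y1 Y0 = psiGen N p (cHT N p Y1 Y0) := by
  rw [psiGen_eq, varHT, expct, expct, mul_sum]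
  refine sum_congr rfl fun w _ => ?_
  rw [tauHT_sub_tauATE hpos]
  ring

lemma A1_eq (hpos : ∀ i, 0 < piS N p i ∧ piS N p i < 1)
    (Y1 Y0 : Fin N → ℝ) (β : ℝ) (v : Fin N → Bool) :
    A1 N p Y1 Y0 β v = (tauATE N Y1 Y0 - β) ^ 2 / (N : ℝ) ^ 2 *
      expct N p fun w => (htCoef N p w ⬝ᵥ imputationShift N p v) ^ 2 := by
  simp only [A1, expct, Sv_eq, ← htCoef_dotProduct_one_sub_piS hpos, ← dotProduct_sub]
  rfl

lemma A2_eq (hpos : ∀ i, 0 < piS N p i ∧ piS N p i < 1)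
    (Y1 Y0 : Fin N → ℝ) (β : ℝ) (hhom : ∀ i, Y1 i - Y0 i = tauATE N Y1 Y0)
    (v : Fin N → Bool) :
    A2 N p Y1 Y0 β v = 2 * (tauATE N Y1 Y0 - β) / (N : ℝ) ^ 2 * expct N p fun w =>
      (htCoef N p w ⬝ᵥ cHT N p Y1 Y0) * (htCoef N p w ⬝ᵥ imputationShift N p v) := by
  simp only [A2, expct, Sv_eq, sub_sum_ite_eq_htCoef_dotProduct,
    ← htCoef_dotProduct_one_sub_piS_eq_sub_NcR hpos, ← dotProduct_sub, cHT_eq Y1 Y0 hhom,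
    dotProduct_add, dotProduct_smul, smul_eq_mul, mul_assoc]
  rfl

lemma psiGen_cHatGenBeta_eq (hpos : ∀ i, 0 < piS N p i ∧ piS N p i < 1) (Y1 Y0 : Fin N → ℝ) (β : ℝ)
    (hhom : ∀ i, Y1 i - Y0 i = tauATE N Y1 Y0) (v : Fin N → Bool) :
    psiGen N p (cHatGenBeta N p Y1 Y0 β v)
      = varHT N p Y1 Y0 + A1 N p Y1 Y0 β v + A2 N p Y1 Y0 β v := by
  rw [cHatGenBeta_eq Y1 Y0 β hhom, varHT_eq_psiGen hpos, A1_eq hpos, A2_eq hpos Y1 Y0 β hhom,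
    psiGen_eq, psiGen_eq]
  simp only [expct, dotProduct_add, dotProduct_smul, smul_eq_mul, mul_sum, ← sum_add_distrib]
  refine sum_congr rfl fun w _ => ?_
  ring

lemma expct_htCoef_dotProduct_imputationShift (hpos : ∀ i, 0 < piS N p i ∧ piS N p i < 1)
    (hsum : ∑ w, p w = 1)
    (hweight : ∀ w : Fin N → Bool, 0 < p w →
      (∑ i, if w i then 1 / piS N p i else 1 / (1 - piS N p i)) = 2 * (N : ℝ))
    {w : Fin N → Bool} (hw : 0 < p w) :
    expct N p (fun v => htCoef N p w ⬝ᵥ imputationShift N p v) = 0 := by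
  rw [expct_dotProduct, sum_smul_imputationShift hsum,
    htCoef_dotProduct_two_mul_piS_sub_one hpos, hweight w hw, sub_self]

lemma expct_A2_eq_zero (hpos : ∀ i, 0 < piS N p i ∧ piS N p i < 1)
    (hp : ∀ w, 0 ≤ p w) (hsum : ∑ w, p w = 1)
    (hweight : ∀ w : Fin N → Bool, 0 < p w →
      (∑ i, if w i then 1 / piS N p i else 1 / (1 - piS N p i)) = 2 * (N : ℝ))
    (Y1 Y0 : Fin N → ℝ) (β : ℝ) (hhom : ∀ i, Y1 i - Y0 i = tauATE N Y1 Y0) :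
    expct N p (A2 N p Y1 Y0 β) = 0 := by
  calc expct N p (A2 N p Y1 Y0 β)
      = 2 * (tauATE N Y1 Y0 - β) / (N : ℝ) ^ 2 * expct N p fun w =>
          (htCoef N p w ⬝ᵥ cHT N p Y1 Y0) *
            expct N p (fun v => htCoef N p w ⬝ᵥ imputationShift N p v) := by
        simp only [expct, A2_eq hpos Y1 Y0 β hhom, mul_sum]
        rw [sum_comm]
        refine sum_congr rfl fun w _ => sum_congr rfl fun v _ => ?_
        ring
    _ = 0 := by
        refine mul_eq_zero_of_right _ (sum_eq_zero fun w _ => ?_)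
        rcases (hp w).eq_or_lt with hw | hw
        · rw [← hw, zero_mul]
        · simp only [expct_htCoef_dotProduct_imputationShift hpos hsum hweight hw, mul_zero]

end FixedWeight

open FixedWeight in
theorem imputation_conservative_fixed_weight_general
    (N : ℕ)
    (p : (Fin N → Bool) → ℝ) (hp : ∀ w, 0 ≤ p w)
    (hsum : ∑ w : Fin N → Bool, p w = 1)
    (hpos : ∀ i, 0 < piS N p i ∧ piS N p i < 1)
    (hweight : ∀ w : Fin N → Bool, 0 < p w →
      (∑ i, if w i then 1 / piS N p i else 1 / (1 - piS N p i)) = 2 * (N : ℝ))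
    (Y1 Y0 : Fin N → ℝ) (β : ℝ)
    (hhom : ∀ i, Y1 i - Y0 i = tauATE N Y1 Y0) :
    expct N p (A2 N p Y1 Y0 β) = 0 ∧
      expct N p (fun v => psiGen N p (cHatGenBeta N p Y1 Y0 β v))
        = varHT N p Y1 Y0 + expct N p (A1 N p Y1 Y0 β) ∧
      varHT N p Y1 Y0 ≤ expct N p (fun v => psiGen N p (cHatGenBeta N p Y1 Y0 β v)) := by
  have hA2 := expct_A2_eq_zero hpos hp hsum hweight Y1 Y0 β hhom
  have hψ : expct N p (fun v => psiGen N p (cHatGenBeta N p Y1 Y0 β v))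
      = varHT N p Y1 Y0 + expct N p (A1 N p Y1 Y0 β) := by
    simp only [psiGen_cHatGenBeta_eq hpos Y1 Y0 β hhom, expct_add, expct_const hsum, hA2, add_zero]
  refine ⟨hA2, hψ, ?_⟩
  rw [hψ]
  exact le_add_of_nonneg_right (expct_nonneg hp (A1_nonneg hp Y1 Y0 β))

/-- Corollary A1: under the fixed total weight condition and homogeneous treatment
effects, `E[A₂(W)] = 0`, hence `E[ψ(ĉ(W))] = Var(τ̂) + E[A₁(W)] ≥ Var(τ̂)`. -/
theorem imputation_conservative_fixed_weight
    (N : ℕ) (hN : 2 ≤ N)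
    (p : (Fin N → Bool) → ℝ) (hp : ∀ w, 0 ≤ p w)
    (hsum : ∑ w : Fin N → Bool, p w = 1)
    (hpos : ∀ i, 0 < piS N p i ∧ piS N p i < 1)
    (hweight : ∀ w : Fin N → Bool, 0 < p w →
      (∑ i, if w i then 1 / piS N p i else 1 / (1 - piS N p i)) = 2 * (N : ℝ))
    (Y1 Y0 : Fin N → ℝ) (β : ℝ)
    (hhom : ∀ i, Y1 i - Y0 i = tauATE N Y1 Y0) :
    expct N p (A2 N p Y1 Y0 β) = 0 ∧
      expct N p (fun v => psiGen N p (cHatGenBeta N p Y1 Y0 β v))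
        = varHT N p Y1 Y0 + expct N p (A1 N p Y1 Y0 β) ∧
      varHT N p Y1 Y0 ≤ expct N p (fun v => psiGen N p (cHatGenBeta N p Y1 Y0 β v)) :=
  imputation_conservative_fixed_weight_general N p hp hsum hpos hweight Y1 Y0 β hhom
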